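/- arXiv:2301.01445 — 3 statements merged into one kernel-verified Lean document; each statement's English description precedes it below -/
import Mathlib

section
/- A polynomial vector field v : ℝ^S → ℝ^S on a finite set S of coordinates is essentially nonnegative if v(x)(i) ≥ 0 whenever x ≥ 0 componentwise and x(i) = 0. If v is essentially nonnegative and f : S → S' is any function between finite sets, then the transformed vector field f_* ∘ v ∘ f* : ℝ^{S'} → ℝ^{S'} is also essentially nonnegative. -/
open scoped Classical

/-- A vector field on `ℝ^S` is polynomial if each component is a polynomial in
the coordinates. -/
def IsPolyVF {S : Type} (v : (S → ℝ) → (S → ℝ)) : Prop :=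
  ∀ i : S, ∃ p : MvPolynomial S ℝ, ∀ x, v x i = MvPolynomial.eval x p

/-- A vector field `v : ℝ^S → ℝ^S` is essentially nonnegative if `v(x)(i) ≥ 0`
whenever `x ≥ 0` componentwise and `x(i) = 0`. -/
def EssNonneg {S : Type} (v : (S → ℝ) → (S → ℝ)) : Prop :=
  ∀ (x : S → ℝ) (i : S), (∀ j, 0 ≤ x j) → x i = 0 → 0 ≤ v x i

/-- The transformed vector field `f_* ∘ v ∘ f*` along `f : S → T`, where `f*` is
precomposition and `f_*` sums over fibers. -/
noncomputable def transformVF {S T : Type} [Fintype S] (f : S → T)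
    (v : (S → ℝ) → (S → ℝ)) : (T → ℝ) → (T → ℝ) :=
  fun x i' => ∑ i : S, if f i = i' then v (x ∘ f) i else 0

theorem transform_essNonneg_general {S S' : Type} [Fintype S] (f : S → S')
    (v : (S → ℝ) → (S → ℝ)) (hv : EssNonneg v) :
    EssNonneg (transformVF f v) := by
  intro x i' hx hxi
  refine Finset.sum_nonneg fun i _ => ?_
  split_ifs with hfi
  · exact hv (x ∘ f) i (fun j => hx (f j)) (by rw [Function.comp_apply, hfi, hxi])
  · exact le_rfl

/-- If a polynomial vector field `v` on `ℝ^S` is essentially nonnegative and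
`f : S → S'` is any function between finite sets, then the transformed vector
field `f_* ∘ v ∘ f*` is also essentially nonnegative. -/
theorem transform_essNonneg {S S' : Type} [Fintype S] [Fintype S'] (f : S → S')
    (v : (S → ℝ) → (S → ℝ)) (hpoly : IsPolyVF v) (hv : EssNonneg v) :
    EssNonneg (transformVF f v) :=
  transform_essNonneg_general f v hv
end

section
/- Let LV be the assignment sending a finite graph X to the linearly parameterized dynamical system with parameters X(V) + X(E), states X(V), and vector field v(x; ρ, β)(i) = ρ(i)x(i) + Σ_{e : i'→i} β(e)x(i')x(i), and sending a graph homomorphism φ : X → Y to the pair (φ_V + φ_E, φ_V). Then for every graph homomorphism φ and all y ∈ ℝ^{Y(V)}, ρ ∈ ℝ^{X(V)}, β ∈ ℝ^{X(E)}, the naturality equation (φ_V)_*( v_X(φ_V^*(y); ρ, β) ) = v_Y(y; (φ_V)_*(ρ), (φ_E)_*(β)) holds; hence LV is a functor from finite graphs to linearly parameterized dynamical systems. -/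
open scoped Classical

/-- A finite graph: finite vertex and edge sets with source and target maps. -/
structure FinGraph where
  V : Type
  E : Type
  [fV : Fintype V]
  [fE : Fintype E]
  src : E → V
  tgt : E → V

attribute [instance] FinGraph.fV FinGraph.fE

/-- A graph homomorphism: vertex and edge maps preserving sources and targets. -/
structure FinGraphHom (X Y : FinGraph) where
  vmap : X.V → Y.V
  emap : X.E → Y.E
  src_comm : ∀ e, Y.src (emap e) = vmap (X.src e)
  tgt_comm : ∀ e, Y.tgt (emap e) = vmap (X.tgt e)

/-- Pushforward `f_*` along `f`, summing over fibers. -/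
noncomputable def graphPushFun {S S' : Type} [Fintype S] (f : S → S') (x : S → ℝ) :
    S' → ℝ :=
  fun i' => ∑ i : S, if f i = i' then x i else 0

/-- The Lotka-Volterra vector field of a finite graph `X`:
`v(x; ρ, β)(i) = ρ(i)x(i) + Σ_{e : i' → i} β(e)x(i')x(i)`. -/
noncomputable def lvField (X : FinGraph) (ρ : X.V → ℝ) (β : X.E → ℝ)
    (x : X.V → ℝ) : X.V → ℝ :=
  fun i => ρ i * x i +
    ∑ e : X.E, if X.tgt e = i then β e * x (X.src e) * x i else 0

/-!
Write `v_X(x; ρ, β) = ρ x + tgt_*(β · src^* x) · x`. Pushforward is additive, functorial,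
satisfies the projection formula `f_*(a · f^* y) = f_* a · y`, and a graph homomorphism
intertwines the source and target maps; naturality is then a formal consequence.
-/

section Pushforward

variable {S S' S'' : Type} [Fintype S]

theorem graphPushFun_add (f : S → S') (x x' : S → ℝ) :
    graphPushFun f (x + x') = graphPushFun f x + graphPushFun f x' := by
  funext j
  simp only [graphPushFun, Pi.add_apply, ← Finset.sum_add_distrib]
  exact Finset.sum_congr rfl fun i _ => by split_ifs <;> simp

theorem graphPushFun_mul_comp (f : S → S') (x : S → ℝ) (y : S' → ℝ) :
    graphPushFun f (x * (y ∘ f)) = graphPushFun f x * y := by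
  funext j
  simp only [graphPushFun, Pi.mul_apply, Function.comp_apply, Finset.sum_mul]
  exact Finset.sum_congr rfl fun i _ => by split_ifs with h <;> simp [h]

theorem graphPushFun_graphPushFun [Fintype S'] (f : S → S') (g : S' → S'') (x : S → ℝ) :
    graphPushFun g (graphPushFun f x) = graphPushFun (g ∘ f) x := by
  funext k
  simp only [graphPushFun, Function.comp_apply, ← Finset.sum_filter]
  convert Finset.sum_fiberwise_eq_sum_filter _ _ f x using 2
  simp

end Pushforward

theorem lvField_eq_graphPushFun (X : FinGraph) (ρ : X.V → ℝ) (β : X.E → ℝ) (x : X.V → ℝ) :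
    lvField X ρ β x = ρ * x + graphPushFun X.tgt (β * (x ∘ X.src)) * x := by
  funext i
  simp only [lvField, graphPushFun, Pi.add_apply, Pi.mul_apply, Function.comp_apply,
    Finset.sum_mul]
  exact congrArg _ <| Finset.sum_congr rfl fun e _ => by split_ifs <;> simp

theorem FinGraphHom.vmap_comp_src {X Y : FinGraph} (φ : FinGraphHom X Y) :
    φ.vmap ∘ X.src = Y.src ∘ φ.emap :=
  funext fun e => (φ.src_comm e).symm

theorem FinGraphHom.vmap_comp_tgt {X Y : FinGraph} (φ : FinGraphHom X Y) :
    φ.vmap ∘ X.tgt = Y.tgt ∘ φ.emap :=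
  funext fun e => (φ.tgt_comm e).symm

/-- Naturality of the Lotka-Volterra model: for every graph homomorphism
`φ : X → Y` and all `y ∈ ℝ^{Y(V)}`, `ρ ∈ ℝ^{X(V)}`, `β ∈ ℝ^{X(E)}`,
`(φ_V)_*(v_X(φ_V^*(y); ρ, β)) = v_Y(y; (φ_V)_*(ρ), (φ_E)_*(β))`;
hence LV is a functor from finite graphs to linearly parameterized dynamical
systems. -/
theorem lv_naturality {X Y : FinGraph} (φ : FinGraphHom X Y)
    (y : Y.V → ℝ) (ρ : X.V → ℝ) (β : X.E → ℝ) :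
    graphPushFun φ.vmap (lvField X ρ β (y ∘ φ.vmap)) =
      lvField Y (graphPushFun φ.vmap ρ) (graphPushFun φ.emap β) y := by
  calc graphPushFun φ.vmap (lvField X ρ β (y ∘ φ.vmap))
      = graphPushFun φ.vmap ρ * y
          + graphPushFun (φ.vmap ∘ X.tgt) (β * (y ∘ (φ.vmap ∘ X.src))) * y := by
        rw [lvField_eq_graphPushFun, graphPushFun_add, graphPushFun_mul_comp,
          graphPushFun_mul_comp, graphPushFun_graphPushFun, Function.comp_assoc]
    _ = graphPushFun φ.vmap ρ * y
          + graphPushFun (Y.tgt ∘ φ.emap) (β * ((y ∘ Y.src) ∘ φ.emap)) * y := by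
        rw [φ.vmap_comp_tgt, φ.vmap_comp_src, Function.comp_assoc]
    _ = lvField Y (graphPushFun φ.vmap ρ) (graphPushFun φ.emap β) y := by
        rw [lvField_eq_graphPushFun, ← graphPushFun_graphPushFun, graphPushFun_mul_comp]
end

section
/- For finite signed graphs and sign-preserving graph homomorphisms φ : X → Y, the naturality equation (φ_V)_*( v_X(φ_V^*(y); ρ, β) ) = v_Y(y; (φ_V)_*(ρ), (φ_E)_*(β)) holds for the signed Lotka-Volterra vector fields v_X(x; ρ, β)(i) = −ρ(i)x(i) + Σ_{e : i'→i} sgn_X(e)β(e)x(i')x(i), for all y ∈ ℝ^{Y(V)}, ρ ∈ ℝ≥0^{X(V)}, β ∈ ℝ≥0^{X(E)}. -/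
open scoped Classical

/-- A finite signed graph. -/
structure FinSgnGraph where
  V : Type
  E : Type
  [fV : Fintype V]
  [fE : Fintype E]
  src : E → V
  tgt : E → V
  sgn : E → ℤˣ

attribute [instance] FinSgnGraph.fV FinSgnGraph.fE

/-- A morphism of signed graphs: a graph homomorphism preserving sources,
targets, and signs. -/
structure FinSgnGraphHom (X Y : FinSgnGraph) where
  vmap : X.V → Y.V
  emap : X.E → Y.E
  src_comm : ∀ e, Y.src (emap e) = vmap (X.src e)
  tgt_comm : ∀ e, Y.tgt (emap e) = vmap (X.tgt e)
  sgn_comm : ∀ e, Y.sgn (emap e) = X.sgn e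

/-- Pushforward `f_*` along `f`, summing over fibers. -/
noncomputable def finPushFun {S S' : Type} [Fintype S] (f : S → S') (x : S → ℝ) :
    S' → ℝ :=
  fun i' => ∑ i : S, if f i = i' then x i else 0

/-- The signed Lotka-Volterra vector field:
`v_X(x; ρ, β)(i) = −ρ(i)x(i) + Σ_{e : i' → i} sgn_X(e)β(e)x(i')x(i)`. -/
noncomputable def lvSgnField (X : FinSgnGraph) (ρ : X.V → ℝ) (β : X.E → ℝ)
    (x : X.V → ℝ) : X.V → ℝ :=
  fun i => -ρ i * x i +
    ∑ e : X.E,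
      if X.tgt e = i then ((X.sgn e : ℤ) : ℝ) * β e * x (X.src e) * x i else 0


/-! Pushforward along a map is additive, functorial, and satisfies the projection formula
`f_*(x · (g ∘ f)) = f_* x · g`. The quadratic part of `v_X(x)` is the pushforward along `tgt` of
the edge weights `β · sgn · (x ∘ src)`, multiplied by `x`; since `φ` commutes with `tgt`,
`(φ_V)_* ∘ tgt_* = tgt_* ∘ (φ_E)_*`, and since it preserves signs and sources, the pulled-back edge
weights factor through `φ_E`. The projection formula then moves both terms of the field across
`φ_*`. -/

section PushForward

variable {S S' S'' : Type} [Fintype S]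

theorem finPushFun_add (f : S → S') (x x' : S → ℝ) :
    finPushFun f (x + x') = finPushFun f x + finPushFun f x' := by
  funext j
  simp only [finPushFun, Pi.add_apply, ← Finset.sum_add_distrib]
  exact Finset.sum_congr rfl fun i _ => by split_ifs <;> simp

theorem finPushFun_neg (f : S → S') (x : S → ℝ) :
    finPushFun f (-x) = -finPushFun f x := by
  funext j
  simp only [finPushFun, Pi.neg_apply, ← Finset.sum_neg_distrib]
  exact Finset.sum_congr rfl fun i _ => by split_ifs <;> simp

theorem finPushFun_mul_comp (f : S → S') (x : S → ℝ) (g : S' → ℝ) :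
    finPushFun f (x * (g ∘ f)) = finPushFun f x * g := by
  funext j
  simp only [finPushFun, Pi.mul_apply, Function.comp_apply, Finset.sum_mul]
  exact Finset.sum_congr rfl fun i _ => by split_ifs with h <;> simp [h]

theorem finPushFun_comp [Fintype S'] (g : S' → S'') (f : S → S') (x : S → ℝ) :
    finPushFun (g ∘ f) x = finPushFun g (finPushFun f x) := by
  funext k
  have h : ∀ j : S', (if g j = k then ∑ i, if f i = j then x i else 0 else 0) =
      ∑ i, if f i = j then (if g j = k then x i else 0) else 0 := fun j => by
    split_ifs <;> simp_all
  simp only [finPushFun, Function.comp_apply, h]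
  rw [Finset.sum_comm]
  simp

end PushForward

namespace FinSgnGraph

noncomputable def signedSource (X : FinSgnGraph) (x : X.V → ℝ) : X.E → ℝ :=
  fun e => ((X.sgn e : ℤ) : ℝ) * x (X.src e)

theorem lvSgnField_eq (X : FinSgnGraph) (ρ : X.V → ℝ) (β : X.E → ℝ) (x : X.V → ℝ) :
    lvSgnField X ρ β x = -(ρ * x) + finPushFun X.tgt (β * X.signedSource x) * x := by
  funext i
  simp only [lvSgnField, finPushFun, signedSource, Pi.add_apply, Pi.neg_apply, Pi.mul_apply,
    Finset.sum_mul]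
  congr 1
  · ring
  · exact Finset.sum_congr rfl fun e _ => by split_ifs <;> ring

end FinSgnGraph

namespace FinSgnGraphHom

variable {X Y : FinSgnGraph} (φ : FinSgnGraphHom X Y)

theorem signedSource_comp (y : Y.V → ℝ) :
    X.signedSource (y ∘ φ.vmap) = Y.signedSource y ∘ φ.emap := by
  funext e
  simp [FinSgnGraph.signedSource, φ.src_comm, φ.sgn_comm]

theorem finPushFun_vmap_tgt (w : X.E → ℝ) :
    finPushFun φ.vmap (finPushFun X.tgt w) = finPushFun Y.tgt (finPushFun φ.emap w) := by
  have : φ.vmap ∘ X.tgt = Y.tgt ∘ φ.emap := funext fun e => (φ.tgt_comm e).symm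
  rw [← finPushFun_comp, this, finPushFun_comp]

end FinSgnGraphHom

theorem lvSgn_naturality_general {X Y : FinSgnGraph} (φ : FinSgnGraphHom X Y)
    (y : Y.V → ℝ) (ρ : X.V → ℝ) (β : X.E → ℝ) :
    finPushFun φ.vmap (lvSgnField X ρ β (y ∘ φ.vmap)) =
      lvSgnField Y (finPushFun φ.vmap ρ) (finPushFun φ.emap β) y := by
  rw [FinSgnGraph.lvSgnField_eq, FinSgnGraph.lvSgnField_eq, finPushFun_add, finPushFun_neg,
    finPushFun_mul_comp, finPushFun_mul_comp, φ.finPushFun_vmap_tgt, φ.signedSource_comp,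
    finPushFun_mul_comp]

/-- Naturality of the signed Lotka-Volterra model: for sign-preserving graph
homomorphisms `φ : X → Y` and nonnegative parameters,
`(φ_V)_*(v_X(φ_V^*(y); ρ, β)) = v_Y(y; (φ_V)_*(ρ), (φ_E)_*(β))`. -/
theorem lvSgn_naturality {X Y : FinSgnGraph} (φ : FinSgnGraphHom X Y)
    (y : Y.V → ℝ) (ρ : X.V → ℝ) (β : X.E → ℝ)
    (hρ : ∀ i, 0 ≤ ρ i) (hβ : ∀ e, 0 ≤ β e) :
    finPushFun φ.vmap (lvSgnField X ρ β (y ∘ φ.vmap)) =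
      lvSgnField Y (finPushFun φ.vmap ρ) (finPushFun φ.emap β) y :=
  lvSgn_naturality_general φ y ρ β
end
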